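/- arXiv:1305.5870 — 2 statements merged into one kernel-verified Lean document; each statement's English description precedes it below -/
import Mathlib

section
/- For 0 < β ≤ 1, the minimax problem min over λ > 1+√β of max over x > 0 of M_λ(x), where M_λ(x) = min{x², (β+1) + 3β/x²} when thresholding optimally, has value ((β+1) + √(β²+14β+1))/2, and the minimizing threshold is λ*(β) = √(2(β+1) + 8β/((β+1)+√(β²+14β+1))). -/
set_option maxHeartbeats 1000000 in
/-- Minimax value of hard thresholding: the minimum over λ > 1+√β of the worst-case
AMSE sup_{x>0} M_λ(x) equals ((β+1) + √(β²+14β+1))/2, and is attained at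
λ*(β) = √(2(β+1) + 8β/((β+1)+√(β²+14β+1))). -/
theorem minimax_amse (β : ℝ) (hβ0 : 0 < β) (hβ1 : β ≤ 1)
    (xstar : ℝ → ℝ)
    (hxstar : ∀ lam : ℝ, xstar lam =
      Real.sqrt ((lam ^ 2 - β - 1 + Real.sqrt ((lam ^ 2 - β - 1) ^ 2 - 4 * β)) / 2))
    (M : ℝ → ℝ → ℝ)
    (hM : ∀ lam x : ℝ, M lam x =
      if x < xstar lam then x ^ 2 else (β + 1) + 3 * β / x ^ 2)
    (v : ℝ) (hv : v = ((β + 1) + Real.sqrt (β ^ 2 + 14 * β + 1)) / 2)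
    (lamstar : ℝ)
    (hls : lamstar = Real.sqrt (2 * (β + 1) + 8 * β / ((β + 1) + Real.sqrt (β ^ 2 + 14 * β + 1)))) :
    (∀ lam : ℝ, 1 + Real.sqrt β < lam → v ≤ sSup {y : ℝ | ∃ x > 0, y = M lam x}) ∧
    (1 + Real.sqrt β < lamstar ∧ sSup {y : ℝ | ∃ x > 0, y = M lamstar x} = v) := by
  have hargr : (0:ℝ) ≤ β ^ 2 + 14 * β + 1 := by nlinarith
  have hr2 : Real.sqrt (β ^ 2 + 14 * β + 1) ^ 2 = β ^ 2 + 14 * β + 1 := Real.sq_sqrt hargr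
  have hrnn : 0 ≤ Real.sqrt (β ^ 2 + 14 * β + 1) := Real.sqrt_nonneg _
  have hvpos : 0 < v := by rw [hv]; linarith
  have hv2 : v ^ 2 = (β + 1) * v + 3 * β := by rw [hv]; nlinarith [hr2]
  have h3bv : 3 * β / v = v - (β + 1) := by
    rw [div_eq_iff hvpos.ne']; nlinarith [hv2]
  have hsb2 : Real.sqrt β ^ 2 = β := Real.sq_sqrt hβ0.le
  have hsbnn : 0 ≤ Real.sqrt β := Real.sqrt_nonneg β
  -- Part 1
  have part1 : ∀ lam : ℝ, 1 + Real.sqrt β < lam →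
      v ≤ sSup {y : ℝ | ∃ x > 0, y = M lam x} := by
    intro lam hlam
    have hs : 2 * Real.sqrt β < lam ^ 2 - β - 1 := by nlinarith [hsb2, hsbnn]
    have hargpos : 0 < (lam ^ 2 - β - 1 + Real.sqrt ((lam ^ 2 - β - 1) ^ 2 - 4 * β)) / 2 := by
      have h0 := Real.sqrt_nonneg ((lam ^ 2 - β - 1) ^ 2 - 4 * β)
      nlinarith [hsbnn]
    have hapos : 0 < xstar lam := by
      rw [hxstar]; exact Real.sqrt_pos.mpr hargpos
    set a := xstar lam with ha
    have hbdd : BddAbove {y : ℝ | ∃ x > 0, y = M lam x} := by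
      refine ⟨max (a ^ 2) ((β + 1) + 3 * β / a ^ 2), ?_⟩
      rintro y ⟨x, hx, rfl⟩
      rw [hM]
      split_ifs with h
      · exact le_max_of_le_left (le_of_lt (pow_lt_pow_left₀ h hx.le two_ne_zero))
      · refine le_max_of_le_right ?_
        have hxa : a ≤ x := le_of_not_gt h
        have h1 : 3 * β / x ^ 2 ≤ 3 * β / a ^ 2 :=
          div_le_div_of_nonneg_left (by positivity) (by positivity)
            (pow_le_pow_left₀ hapos.le hxa 2)
        linarith
    rcases le_or_gt (a ^ 2) v with hc | hc
    · have hmem : (β + 1) + 3 * β / a ^ 2 ∈ {y : ℝ | ∃ x > 0, y = M lam x} :=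
        ⟨a, hapos, by rw [hM, if_neg (lt_irrefl a)]⟩
      have h1 : 3 * β / v ≤ 3 * β / a ^ 2 :=
        div_le_div_of_nonneg_left (by positivity) (by positivity) hc
      have hge : v ≤ (β + 1) + 3 * β / a ^ 2 := by linarith [h3bv]
      exact hge.trans (le_csSup hbdd hmem)
    · have hsv : Real.sqrt v < a := by
        have h1 : Real.sqrt v < Real.sqrt (a ^ 2) := Real.sqrt_lt_sqrt hvpos.le hc
        rwa [Real.sqrt_sq hapos.le] at h1
      have hsvnn : 0 ≤ Real.sqrt v := Real.sqrt_nonneg v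
      set x := (Real.sqrt v + a) / 2 with hxdef
      have hx0 : 0 < x := by rw [hxdef]; positivity
      have hxa : x < a := by rw [hxdef]; linarith
      have hvx : v < x ^ 2 := by
        have hsvx : Real.sqrt v < x := by rw [hxdef]; linarith
        calc v = Real.sqrt v ^ 2 := (Real.sq_sqrt hvpos.le).symm
          _ < x ^ 2 := pow_lt_pow_left₀ hsvx hsvnn two_ne_zero
      have hmem : x ^ 2 ∈ {y : ℝ | ∃ x > 0, y = M lam x} :=
        ⟨x, hx0, by rw [hM, if_pos hxa]⟩
      exact (le_of_lt hvx).trans (le_csSup hbdd hmem)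
  refine ⟨part1, ?_, ?_⟩
  · -- lamstar > 1 + sqrt β
    have h2v : (β + 1) + Real.sqrt (β ^ 2 + 14 * β + 1) = 2 * v := by rw [hv]; ring
    have hLarg : 2 * (β + 1) + 8 * β / ((β + 1) + Real.sqrt (β ^ 2 + 14 * β + 1))
        = 2 * (β + 1) + 4 * β / v := by
      rw [h2v]; field_simp; ring
    have h4bv : 0 < 4 * β / v := by positivity
    have h1l : (1 + Real.sqrt β) ^ 2 < 2 * (β + 1) + 4 * β / v := by
      nlinarith [hsb2, hsbnn]
    calc 1 + Real.sqrt β = Real.sqrt ((1 + Real.sqrt β) ^ 2) :=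
          (Real.sqrt_sq (by positivity)).symm
      _ < lamstar := by
          rw [hls, hLarg]
          exact Real.sqrt_lt_sqrt (sq_nonneg _) h1l
  · -- sSup = v
    have h2v : (β + 1) + Real.sqrt (β ^ 2 + 14 * β + 1) = 2 * v := by rw [hv]; ring
    have hLarg : 2 * (β + 1) + 8 * β / ((β + 1) + Real.sqrt (β ^ 2 + 14 * β + 1))
        = 2 * (β + 1) + 4 * β / v := by
      rw [h2v]; field_simp; ring
    have hLpos : 0 < 2 * (β + 1) + 4 * β / v := by positivity
    have hls2 : lamstar ^ 2 = 2 * (β + 1) + 4 * β / v := by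
      rw [hls, hLarg]; exact Real.sq_sqrt hLpos.le
    have hvs : v * (lamstar ^ 2 - β - 1) = v ^ 2 + β := by
      rw [hls2]; field_simp; nlinarith [hv2]
    have h2vs : 0 ≤ 2 * v - (lamstar ^ 2 - β - 1) := by nlinarith [hvs, hv2, hvpos]
    have hsq : (lamstar ^ 2 - β - 1) ^ 2 - 4 * β = (2 * v - (lamstar ^ 2 - β - 1)) ^ 2 := by
      linear_combination 4 * hvs
    have ha : xstar lamstar = Real.sqrt v := by
      rw [hxstar, hsq, Real.sqrt_sq h2vs]
      congr 1
      ring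
    have ha2 : Real.sqrt v ^ 2 = v := Real.sq_sqrt hvpos.le
    have hub : ∀ y ∈ {y : ℝ | ∃ x > 0, y = M lamstar x}, y ≤ v := by
      rintro y ⟨x, hx, rfl⟩
      rw [hM]
      split_ifs with h
      · rw [ha] at h
        have : x ^ 2 < Real.sqrt v ^ 2 := pow_lt_pow_left₀ h hx.le two_ne_zero
        rw [ha2] at this
        exact this.le
      · rw [ha] at h
        have hxv : v ≤ x ^ 2 := by
          have h' := le_of_not_gt h
          calc v = Real.sqrt v ^ 2 := ha2.symm
            _ ≤ x ^ 2 := pow_le_pow_left₀ (Real.sqrt_nonneg v) h' 2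
        have h1 : 3 * β / x ^ 2 ≤ 3 * β / v :=
          div_le_div_of_nonneg_left (by positivity) hvpos hxv
        linarith [h3bv]
    have hmem : v ∈ {y : ℝ | ∃ x > 0, y = M lamstar x} := by
      refine ⟨Real.sqrt v, Real.sqrt_pos.mpr hvpos, ?_⟩
      rw [hM, ha]
      split_ifs with h
      · exact absurd h (lt_irrefl _)
      · rw [ha2]; linarith [h3bv]
    exact le_antisymm (csSup_le ⟨v, hmem⟩ hub) (le_csSup ⟨v, hub⟩ hmem)
end

section
/- In the square case β = 1: min over λ > 2 of max over x > 0 of M_λ(x) equals 3, where M_λ(x) = x² for 0 < x < x*(λ) and M_λ(x) = 2 + 3/x² for x ≥ x*(λ), with x*(λ) = (λ+√(λ²−4))/2; and the minimizing λ is 4/√3. -/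
/-!
Below its cutoff `t` the risk is `x ^ 2`, increasing towards `t ^ 2` (not attained); from `t` on it
is `2 + 3 / x ^ 2`, decreasing from `2 + 3 / t ^ 2`. So the worst case is `max (t ^ 2) (2 + 3 / t ^ 2)`,
which is at least `3`, with equality exactly when both branches meet, `t ^ 2 = 3`. The cutoff
`x*(λ)` inverts `x ↦ x + 1 / x` on `x ≥ 1`, so `t = √3` is reached at `λ = √3 + 1 / √3 = 4 / √3`.
-/

open Set

/-- The rank-one AMSE `M_λ(x)`, parametrised by the cutoff `t = x*(λ)`. -/
noncomputable def amse (t x : ℝ) : ℝ := if x < t then x ^ 2 else 2 + 3 / x ^ 2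

lemma amse_le_max {t x : ℝ} (ht : 0 < t) (hx : 0 < x) :
    amse t x ≤ max (t ^ 2) (2 + 3 / t ^ 2) := by
  unfold amse
  split_ifs with hxt
  · exact le_max_of_le_left (pow_le_pow_left₀ hx.le hxt.le 2)
  · have hsq : t ^ 2 ≤ x ^ 2 := pow_le_pow_left₀ ht.le (not_lt.mp hxt) 2
    have : 3 / x ^ 2 ≤ 3 / t ^ 2 := div_le_div_of_nonneg_left (by norm_num) (by positivity) hsq
    exact le_max_of_le_right (by linarith)

lemma exists_sq_gt_of_lt_sq {t y : ℝ} (ht : 0 < t) (hy : y < t ^ 2) :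
    ∃ x ∈ Ioo 0 t, y < x ^ 2 := by
  have hsqrt : √y < t := (Real.sqrt_lt' ht).mpr hy
  refine ⟨(√y + t) / 2, ⟨by positivity, by linarith⟩, ?_⟩
  exact (Real.sqrt_lt' (by positivity)).mp (by linarith)

theorem sSup_image_amse {t : ℝ} (ht : 0 < t) :
    sSup (amse t '' Ioi 0) = max (t ^ 2) (2 + 3 / t ^ 2) := by
  refine csSup_eq_of_forall_le_of_forall_lt_exists_gt ((nonempty_Ioi).image _) ?_ ?_
  · rintro _ ⟨x, hx, rfl⟩
    exact amse_le_max ht hx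
  · intro y hy
    rcases lt_max_iff.mp hy with hy | hy
    · obtain ⟨x, ⟨hx, hxt⟩, hyx⟩ := exists_sq_gt_of_lt_sq ht hy
      exact ⟨_, mem_image_of_mem _ (mem_Ioi.mpr hx), by rwa [amse, if_pos hxt]⟩
    · exact ⟨_, mem_image_of_mem _ (mem_Ioi.mpr ht), by rwa [amse, if_neg (lt_irrefl t)]⟩

lemma three_le_max_sq {t : ℝ} (ht : t ≠ 0) : 3 ≤ max (t ^ 2) (2 + 3 / t ^ 2) := by
  rcases le_or_gt 3 (t ^ 2) with h | h
  · exact le_max_of_le_left h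
  · have : 1 < 3 / t ^ 2 := (one_lt_div (by positivity)).mpr h
    exact le_max_of_le_right (by linarith)

lemma max_sq_sqrt_three : max (√3 ^ 2) (2 + 3 / √3 ^ 2) = 3 := by
  norm_num

lemma add_sqrt_div_two_of_add_inv {x : ℝ} (hx : 1 ≤ x) :
    (x + x⁻¹ + √((x + x⁻¹) ^ 2 - 4)) / 2 = x := by
  have hx0 : 0 < x := by linarith
  have hsq : (x + x⁻¹) ^ 2 - 4 = (x - x⁻¹) ^ 2 := by
    field_simp
    ring
  rw [hsq, Real.sqrt_sq (sub_nonneg.mpr ((inv_le_one₀ hx0).mpr hx |>.trans hx))]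
  ring

lemma two_lt_add_inv {x : ℝ} (hx : 1 < x) : 2 < x + x⁻¹ := by
  have hx0 : 0 < x := by linarith
  have hinv : x * x⁻¹ = 1 := mul_inv_cancel₀ hx0.ne'
  nlinarith [inv_pos.mpr hx0]

lemma sqrt_three_add_inv : √3 + (√3)⁻¹ = 4 / √3 := by
  have : (0 : ℝ) < √3 := by positivity
  field_simp
  norm_num

/-- Square case minimax: min over λ > 2 of the worst-case AMSE sup_{x>0} M_λ(x)
equals 3, and is attained at λ = 4/√3. -/
theorem minimax_amse_square
    (xstar : ℝ → ℝ)
    (hxstar : ∀ lam : ℝ, xstar lam = (lam + Real.sqrt (lam ^ 2 - 4)) / 2)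
    (M : ℝ → ℝ → ℝ)
    (hM : ∀ lam x : ℝ, M lam x = if x < xstar lam then x ^ 2 else 2 + 3 / x ^ 2) :
    (∀ lam : ℝ, 2 < lam → 3 ≤ sSup {y : ℝ | ∃ x > 0, y = M lam x}) ∧
    ((2 : ℝ) < 4 / Real.sqrt 3 ∧
      sSup {y : ℝ | ∃ x > 0, y = M (4 / Real.sqrt 3) x} = 3) := by
  have hset (lam : ℝ) : {y : ℝ | ∃ x > 0, y = M lam x} = amse (xstar lam) '' Ioi 0 := by
    ext y
    simp only [hM, amse, mem_ofPred_eq, mem_image, mem_Ioi, eq_comm]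
  have one_lt_sqrt_three : 1 < √3 := by
    rw [Real.lt_sqrt zero_le_one]
    norm_num
  have hcutoff : xstar (4 / √3) = √3 := by
    rw [hxstar, ← sqrt_three_add_inv, add_sqrt_div_two_of_add_inv one_lt_sqrt_three.le]
  refine ⟨fun lam hlam => ?_, ?_, ?_⟩
  · have hpos : 0 < xstar lam := by
      rw [hxstar]
      positivity
    rw [hset, sSup_image_amse hpos]
    exact three_le_max_sq hpos.ne'
  · exact sqrt_three_add_inv ▸ two_lt_add_inv one_lt_sqrt_three
  · rw [hset, hcutoff, sSup_image_amse (by positivity), max_sq_sqrt_three]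
end
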